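/- arXiv:1709.01543 — 5 statements merged into one kernel-verified Lean document; each statement's English description precedes it below -/
import Mathlib

section
/- (Theorem 1, algebraic equilibrium version.) Let I be a finite nonempty index set (controllable generators) equipped with a connected undirected communication graph with neighbor sets N_i, let each f_i : ℝ → ℝ be differentiable and strictly convex, let D_i ≥ 0 (i in the set G of all generators, with I ⊆ G), D̃_i ≥ 0 (i ∈ N, the set of all buses) with Σ_{i∈N} D̃_i > 0, let z_{ij} = −z_{ji} for communication-adjacent pairs, and let ω₀ ∈ ℝ be the common equilibrium frequency deviation. Suppose the equilibrium conditions hold: (i) ω₀ + f_i'(P_i) + μ_i − γ_i⁻ + γ_i⁺ = 0 for all i ∈ I; (ii) P_i − p̂_i − Σ_{j∈N_i}(μ_i − μ_j) − Σ_{j∈N_i} z_{ij} = 0 for all i ∈ I; (iii) μ_i = μ_j for every communication edge (i,j); (iv) γ_i⁻ ≥ 0, γ_i⁺ ≥ 0, P̲_i ≤ P_i ≤ P̄_i, γ_i⁻(P̲_i − P_i) = 0 and γ_i⁺(P_i − P̄_i) = 0 for all i ∈ I; (v) the summed network power balance Σ_{i∈G} P_i − ω₀·(Σ_{i∈G} D_i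 + Σ_{i∈N} D̃_i) − Σ_{i∈N} p_i = 0; (vi) Σ_{i∈I} p̂_i = Σ_{i∈N} p_i − Σ_{i∈G∖I} P_i. Then: (1) P̲_i ≤ P_i ≤ P̄_i for all i ∈ I; (2) ω₀ = 0; (3) all μ_i equal a common value μ₀ and f_i'(P_i) − γ_i⁻ + γ_i⁺ = f_j'(P_j) − γ_j⁻ + γ_j⁺ for all i, j ∈ I; (4) (P_i)_{i∈I} is the unique optimal solution of the SFC problem with c = Σ_{i∈N} p_i − Σ_{i∈G∖I} P_i. -/
/-!
Consensus (iii) on the connected communication graph makes all `μ i` equal to one `μ₀`. Summing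
(ii) over the controllable generators, the Laplacian term then vanishes and so does the
antisymmetric `z`-term, so the controllable generation meets the demand `c` exactly; with that,
the network balance (v) reads `ω₀ · (total damping) = 0`, whence `ω₀ = 0`. Now (i) and (iv) are
the KKT conditions of the SFC problem with balance multiplier `-μ₀`: the gradient inequality of
each convex `f i` plus complementary slackness give optimality, and strict convexity of the
separable objective gives uniqueness.
-/

open Finset

namespace SimpleGraph

variable {V : Type*} {G : SimpleGraph V}

lemma Preconnected.eq_of_forall_adj {β : Sort*} {x : V → β} (hG : G.Preconnected)
    (h : ∀ i j, G.Adj i j → x i = x j) (i j : V) : x i = x j := by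
  obtain ⟨w⟩ := hG i j
  induction w with
  | nil => rfl
  | cons hadj _ ih => exact (h _ _ hadj).trans ih

lemma sum_sum_filter_adj_eq_zero_of_antisymm [Fintype V] [DecidableRel G.Adj]
    {M : Type*} [AddCommGroup M] [IsAddTorsionFree M] {z : V → V → M}
    (hz : ∀ i j, G.Adj i j → z i j = -z j i) :
    ∑ i, ∑ j ∈ univ.filter (fun j => G.Adj i j), z i j = 0 := by
  refine self_eq_neg.mp ?_
  calc ∑ i, ∑ j ∈ univ.filter (fun j => G.Adj i j), z i j
      = ∑ j, ∑ i ∈ univ.filter (fun i => G.Adj j i), z i j :=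
        sum_comm' fun i j => by simp [G.adj_comm]
    _ = -∑ j, ∑ i ∈ univ.filter (fun i => G.Adj j i), z j i := by
        simp only [← sum_neg_distrib]
        exact sum_congr rfl fun j _ => sum_congr rfl fun i hi =>
          hz i j (G.adj_symm (mem_filter.mp hi).2)

end SimpleGraph

lemma ConvexOn.add_deriv_mul_sub_le {S : Set ℝ} {f : ℝ → ℝ} {x y : ℝ} (hf : ConvexOn ℝ S f)
    (hx : x ∈ S) (hy : y ∈ S) (hd : DifferentiableAt ℝ f x) :
    f x + deriv f x * (y - x) ≤ f y := by
  rcases lt_trichotomy x y with hxy | rfl | hyx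
  · have h := hf.deriv_le_slope hx hy hxy hd
    rw [slope_def_field, le_div_iff₀ (sub_pos.mpr hxy)] at h
    linarith
  · simp
  · have h := hf.slope_le_deriv hy hx hyx hd
    rw [slope_def_field, div_le_iff₀ (sub_pos.mpr hyx)] at h
    linarith

lemma strictConvexOn_sum_apply {ι 𝕜 E β : Type*} [Fintype ι] [Semiring 𝕜] [PartialOrder 𝕜]
    [AddCommMonoid E] [Module 𝕜 E] [AddCommMonoid β] [PartialOrder β]
    [IsOrderedCancelAddMonoid β] [Module 𝕜 β] {f : ι → E → β}
    (hf : ∀ i, StrictConvexOn 𝕜 Set.univ (f i)) {s : Set (ι → E)} (hs : Convex 𝕜 s) :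
    StrictConvexOn 𝕜 s (fun x => ∑ i, f i (x i)) := by
  refine ⟨hs, fun x _ y _ hxy a b ha hb hab => ?_⟩
  obtain ⟨i₀, hi₀⟩ := Function.ne_iff.mp hxy
  calc ∑ i, f i ((a • x + b • y) i)
      < ∑ i, (a • f i (x i) + b • f i (y i)) :=
        sum_lt_sum (fun i _ => (hf i).convexOn.2 (Set.mem_univ (x i)) (Set.mem_univ (y i)) ha.le hb.le hab)
          ⟨i₀, mem_univ _, (hf i₀).2 (Set.mem_univ (x i₀)) (Set.mem_univ (y i₀)) hi₀ ha hb hab⟩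
    _ = a • ∑ i, f i (x i) + b • ∑ i, f i (y i) := by
        rw [sum_add_distrib, smul_sum, smul_sum]

lemma sum_le_sum_of_kkt {ι : Type*} [Fintype ι] {f : ι → ℝ → ℝ} {lo hi P Q γm γp : ι → ℝ}
    {ν : ℝ} (hconv : ∀ i, ConvexOn ℝ Set.univ (f i))
    (hdiff : ∀ i, DifferentiableAt ℝ (f i) (P i))
    (hderiv : ∀ i, deriv (f i) (P i) = ν + γm i - γp i)
    (hγm : ∀ i, 0 ≤ γm i) (hγp : ∀ i, 0 ≤ γp i)
    (hslack_lo : ∀ i, γm i * (lo i - P i) = 0) (hslack_hi : ∀ i, γp i * (P i - hi i) = 0)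
    (hQ : ∀ i, lo i ≤ Q i ∧ Q i ≤ hi i) (hsum : ∑ i, Q i = ∑ i, P i) :
    ∑ i, f i (P i) ≤ ∑ i, f i (Q i) := by
  have hterm : ∀ i, f i (P i) + ν * (Q i - P i) ≤ f i (Q i) := fun i => by
    have hgrad := (hconv i).add_deriv_mul_sub_le trivial trivial (hdiff i) (y := Q i)
    have hm : 0 ≤ γm i * (Q i - lo i) := mul_nonneg (hγm i) (sub_nonneg.mpr (hQ i).1)
    have hp : 0 ≤ γp i * (hi i - Q i) := mul_nonneg (hγp i) (sub_nonneg.mpr (hQ i).2)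
    rw [hderiv i] at hgrad
    linear_combination hgrad + hm + hp - hslack_lo i - hslack_hi i
  calc ∑ i, f i (P i) = ∑ i, (f i (P i) + ν * (Q i - P i)) := by
        rw [sum_add_distrib, ← mul_sum, sum_sub_distrib, hsum, sub_self, mul_zero, add_zero]
    _ ≤ ∑ i, f i (Q i) := sum_le_sum fun i _ => hterm i

def sfcFeasibleSet {ι : Type*} [Fintype ι] (lo hi : ι → ℝ) (c : ℝ) : Set (ι → ℝ) :=
  {Q | ∑ i, Q i = c ∧ ∀ i, lo i ≤ Q i ∧ Q i ≤ hi i}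

lemma convex_sfcFeasibleSet {ι : Type*} [Fintype ι] (lo hi : ι → ℝ) (c : ℝ) :
    Convex ℝ (sfcFeasibleSet lo hi c) := by
  rintro x ⟨hxc, hx⟩ y ⟨hyc, hy⟩ a b ha hb hab
  refine ⟨?_, fun i => ?_⟩
  · simp only [Pi.add_apply, Pi.smul_apply, smul_eq_mul, sum_add_distrib, ← mul_sum, hxc, hyc]
    rw [← add_mul, hab, one_mul]
  · simp only [Pi.add_apply, Pi.smul_apply, smul_eq_mul]
    obtain ⟨hxl, hxh⟩ := hx i
    obtain ⟨hyl, hyh⟩ := hy i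
    constructor
    · linear_combination mul_nonneg ha (sub_nonneg.mpr hxl) + mul_nonneg hb (sub_nonneg.mpr hyl)
        - lo i * hab
    · linear_combination mul_nonneg ha (sub_nonneg.mpr hxh) + mul_nonneg hb (sub_nonneg.mpr hyh)
        + hi i * hab

open Finset in
/-- `CG` are the controllable generators, `UG` the uncontrollable ones and `LB` the pure load
buses: the generators are `CG ⊕ UG` and the buses `(CG ⊕ UG) ⊕ LB`. -/
theorem equilibrium_optimal_general {CG UG LB : Type*}
    [Fintype CG] [Fintype UG] [Fintype LB]
    (Gc : SimpleGraph CG) [DecidableRel Gc.Adj] (hconn : Gc.Connected)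
    (f : CG → ℝ → ℝ) (hdiff : ∀ i, Differentiable ℝ (f i))
    (hconv : ∀ i, StrictConvexOn ℝ Set.univ (f i))
    (Plo Phi : CG → ℝ)
    (D : CG ⊕ UG → ℝ) (hD : ∀ i, 0 ≤ D i)
    (Dt : (CG ⊕ UG) ⊕ LB → ℝ) (hDtpos : 0 < ∑ i, Dt i)
    (z : CG → CG → ℝ) (hz : ∀ i j, Gc.Adj i j → z i j = - z j i)
    (ω₀ : ℝ) (P : CG ⊕ UG → ℝ) (phat μ γm γp : CG → ℝ)
    (p : (CG ⊕ UG) ⊕ LB → ℝ)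
    (h1 : ∀ i, ω₀ + deriv (f i) (P (Sum.inl i)) + μ i - γm i + γp i = 0)
    (h2 : ∀ i, P (Sum.inl i) - phat i
          - (∑ j ∈ univ.filter (fun j => Gc.Adj i j), (μ i - μ j))
          - (∑ j ∈ univ.filter (fun j => Gc.Adj i j), z i j) = 0)
    (h3 : ∀ i j, Gc.Adj i j → μ i = μ j)
    (h4 : ∀ i, 0 ≤ γm i ∧ 0 ≤ γp i ∧ Plo i ≤ P (Sum.inl i) ∧ P (Sum.inl i) ≤ Phi i ∧
          γm i * (Plo i - P (Sum.inl i)) = 0 ∧ γp i * (P (Sum.inl i) - Phi i) = 0)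
    (h5 : (∑ i, P i) - ω₀ * ((∑ i, D i) + (∑ i, Dt i)) - (∑ i, p i) = 0)
    (h6 : ∑ i, phat i = (∑ i, p i) - (∑ k, P (Sum.inr k))) :
    (∀ i, Plo i ≤ P (Sum.inl i) ∧ P (Sum.inl i) ≤ Phi i) ∧
    ω₀ = 0 ∧
    (∃ μ₀ : ℝ, ∀ i, μ i = μ₀) ∧
    (∀ i j, deriv (f i) (P (Sum.inl i)) - γm i + γp i
          = deriv (f j) (P (Sum.inl j)) - γm j + γp j) ∧
    ((((∑ i, P (Sum.inl i)) = (∑ i, p i) - (∑ k, P (Sum.inr k))) ∧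
        (∀ i, Plo i ≤ P (Sum.inl i) ∧ P (Sum.inl i) ≤ Phi i)) ∧
      (∀ Q : CG → ℝ,
        (((∑ i, Q i) = (∑ i, p i) - (∑ k, P (Sum.inr k))) ∧
          (∀ i, Plo i ≤ Q i ∧ Q i ≤ Phi i)) →
        ∑ i, f i (P (Sum.inl i)) ≤ ∑ i, f i (Q i)) ∧
      (∀ Q : CG → ℝ,
        ((((∑ i, Q i) = (∑ i, p i) - (∑ k, P (Sum.inr k))) ∧
            (∀ i, Plo i ≤ Q i ∧ Q i ≤ Phi i)) ∧
          (∀ R : CG → ℝ,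
            (((∑ i, R i) = (∑ i, p i) - (∑ k, P (Sum.inr k))) ∧
              (∀ i, Plo i ≤ R i ∧ R i ≤ Phi i)) →
            ∑ i, f i (Q i) ≤ ∑ i, f i (R i))) →
        Q = fun i => P (Sum.inl i))) := by
  obtain ⟨i₀⟩ := hconn.nonempty
  have hμ : ∀ i, μ i = μ i₀ := fun i => hconn.preconnected.eq_of_forall_adj h3 i i₀
  have hbounds i : Plo i ≤ P (Sum.inl i) ∧ P (Sum.inl i) ≤ Phi i := ⟨(h4 i).2.2.1, (h4 i).2.2.2.1⟩
  have hbalance : ∑ i, P (Sum.inl i) = ∑ i, p i - ∑ k, P (Sum.inr k) := by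
    have hlap i : ∑ j ∈ univ.filter (fun j => Gc.Adj i j), (μ i - μ j) = 0 :=
      sum_eq_zero fun j hj => sub_eq_zero.mpr (h3 i j (mem_filter.mp hj).2)
    have hsum := sum_eq_zero fun i (_ : i ∈ univ) => h2 i
    simp only [sum_sub_distrib, hlap, sum_const_zero,
      Gc.sum_sum_filter_adj_eq_zero_of_antisymm hz] at hsum
    linarith
  have hω : ω₀ = 0 := by
    have hdamping : 0 < ∑ i, D i + ∑ i, Dt i :=
      add_pos_of_nonneg_of_pos (sum_nonneg fun i _ => hD i) hDtpos
    rw [Fintype.sum_sum_type, hbalance] at h5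
    exact (mul_eq_zero.mp (by linarith)).resolve_right hdamping.ne'
  have hkkt i : deriv (f i) (P (Sum.inl i)) = -μ i₀ + γm i - γp i := by
    linarith [h1 i, hμ i]
  have hmin : IsMinOn (fun Q => ∑ i, f i (Q i))
      (sfcFeasibleSet Plo Phi (∑ i, p i - ∑ k, P (Sum.inr k))) (fun i => P (Sum.inl i)) :=
    isMinOn_iff.mpr fun Q hQ => sum_le_sum_of_kkt (fun i => (hconv i).convexOn)
      (fun i => hdiff i _) hkkt (fun i => (h4 i).1) (fun i => (h4 i).2.1)
      (fun i => (h4 i).2.2.2.2.1) (fun i => (h4 i).2.2.2.2.2) hQ.2 (hQ.1.trans hbalance.symm)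
  refine ⟨hbounds, hω, ⟨μ i₀, hμ⟩, fun i j => by linarith [hkkt i, hkkt j],
    ⟨hbalance, hbounds⟩, fun Q hQ => hmin hQ, fun Q hQ => ?_⟩
  exact (strictConvexOn_sum_apply hconv (convex_sfcFeasibleSet _ _ _)).eq_of_isMinOn
    (isMinOn_iff.mpr hQ.2) hmin hQ.1 ⟨hbalance, hbounds⟩

open Finset in
/-- **Theorem 1 (algebraic equilibrium version).**
`CG` are the controllable generators (with a connected communication graph `Gc`),
`UG` the uncontrollable generators and `LB` the pure load buses; the set of all
generators is `CG ⊕ UG` and the set of all buses is `CG ⊕ UG ⊕ LB`.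
At any equilibrium of the closed-loop system:
(1) the controllable generations satisfy their capacity limits;
(2) the common frequency deviation `ω₀` is zero;
(3) all local multiplier estimates `μ i` agree, and marginal generation costs
    are identical across controllable generators;
(4) the vector of controllable generations is the unique optimal solution of the
    SFC problem with total demand `c = ∑ p - ∑_{UG} P`. -/
theorem equilibrium_optimal {CG UG LB : Type*}
    [Fintype CG] [Fintype UG] [Fintype LB] [Nonempty CG]
    (Gc : SimpleGraph CG) [DecidableRel Gc.Adj] (hconn : Gc.Connected)
    (f : CG → ℝ → ℝ) (hdiff : ∀ i, Differentiable ℝ (f i))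
    (hconv : ∀ i, StrictConvexOn ℝ Set.univ (f i))
    (Plo Phi : CG → ℝ) (hle : ∀ i, Plo i ≤ Phi i)
    (D : CG ⊕ UG → ℝ) (hD : ∀ i, 0 ≤ D i)
    (Dt : (CG ⊕ UG) ⊕ LB → ℝ) (hDt : ∀ i, 0 ≤ Dt i) (hDtpos : 0 < ∑ i, Dt i)
    (z : CG → CG → ℝ) (hz : ∀ i j, Gc.Adj i j → z i j = - z j i)
    (ω₀ : ℝ) (P : CG ⊕ UG → ℝ) (phat μ γm γp : CG → ℝ)
    (p : (CG ⊕ UG) ⊕ LB → ℝ)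
    (h1 : ∀ i, ω₀ + deriv (f i) (P (Sum.inl i)) + μ i - γm i + γp i = 0)
    (h2 : ∀ i, P (Sum.inl i) - phat i
          - (∑ j ∈ univ.filter (fun j => Gc.Adj i j), (μ i - μ j))
          - (∑ j ∈ univ.filter (fun j => Gc.Adj i j), z i j) = 0)
    (h3 : ∀ i j, Gc.Adj i j → μ i = μ j)
    (h4 : ∀ i, 0 ≤ γm i ∧ 0 ≤ γp i ∧ Plo i ≤ P (Sum.inl i) ∧ P (Sum.inl i) ≤ Phi i ∧
          γm i * (Plo i - P (Sum.inl i)) = 0 ∧ γp i * (P (Sum.inl i) - Phi i) = 0)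
    (h5 : (∑ i, P i) - ω₀ * ((∑ i, D i) + (∑ i, Dt i)) - (∑ i, p i) = 0)
    (h6 : ∑ i, phat i = (∑ i, p i) - (∑ k, P (Sum.inr k))) :
    (∀ i, Plo i ≤ P (Sum.inl i) ∧ P (Sum.inl i) ≤ Phi i) ∧
    ω₀ = 0 ∧
    (∃ μ₀ : ℝ, ∀ i, μ i = μ₀) ∧
    (∀ i j, deriv (f i) (P (Sum.inl i)) - γm i + γp i
          = deriv (f j) (P (Sum.inl j)) - γm j + γp j) ∧
    ((((∑ i, P (Sum.inl i)) = (∑ i, p i) - (∑ k, P (Sum.inr k))) ∧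
        (∀ i, Plo i ≤ P (Sum.inl i) ∧ P (Sum.inl i) ≤ Phi i)) ∧
      (∀ Q : CG → ℝ,
        (((∑ i, Q i) = (∑ i, p i) - (∑ k, P (Sum.inr k))) ∧
          (∀ i, Plo i ≤ Q i ∧ Q i ≤ Phi i)) →
        ∑ i, f i (P (Sum.inl i)) ≤ ∑ i, f i (Q i)) ∧
      (∀ Q : CG → ℝ,
        ((((∑ i, Q i) = (∑ i, p i) - (∑ k, P (Sum.inr k))) ∧
            (∀ i, Plo i ≤ Q i ∧ Q i ≤ Phi i)) ∧
          (∀ R : CG → ℝ,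
            (((∑ i, R i) = (∑ i, p i) - (∑ k, P (Sum.inr k))) ∧
              (∀ i, Plo i ≤ R i ∧ R i ≤ Phi i)) →
            ∑ i, f i (Q i) ≤ ∑ i, f i (R i))) →
        Q = fun i => P (Sum.inl i))) :=
  equilibrium_optimal_general Gc hconn f hdiff hconv Plo Phi D hD Dt hDtpos z hz ω₀ P phat μ γm γp p
    h1 h2 h3 h4 h5 h6
end

section
/- (Core of Lemma 2.) Let I be a finite nonempty index set with a symmetric adjacency relation N, each f_i : ℝ → ℝ differentiable, z antisymmetric on adjacent pairs (z_{ij} = −z_{ji}), and D_i, τ_i real with D_i + τ_i > 0 for all i. Suppose there is ω₀ ∈ ℝ such that for every i ∈ I: (i) ω₀ + f_i'(P_i) + μ_i − γ_i⁻ + γ_i⁺ = 0, and (ii) −Σ_{j∈N_i}(μ_i − μ_j) − Σ_{j∈N_i} z_{ij} + D_i ω₀ + τ_i·(−μ_i − f_i'(P_i) + γ_i⁻ − γ_i⁺) = 0. Then ω₀ = 0. -/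
/-!
Summing the estimator equilibrium (ii) over all nodes, the Laplacian term `∑ (μ i - μ j)` and the
flow term `∑ z i j` cancel because both are antisymmetric over the symmetric edge set. Substituting
the generator equilibrium (i) into (ii) turns the `τ i` term into `τ i * ω₀`, so what remains is
`(∑ i, (D i + τ i)) * ω₀ = 0`, and the coefficient is positive.
-/

theorem Finset.sum_sum_filter_eq_zero_of_antisymm {ι M : Type*} [Fintype ι] [AddCommGroup M]
    [IsAddTorsionFree M] (adj : ι → ι → Prop) [DecidableRel adj]
    (hsym : ∀ i j, adj i j → adj j i) (g : ι → ι → M) (hg : ∀ i j, adj i j → g i j = -g j i) :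
    ∑ i, ∑ j ∈ univ.filter (adj i), g i j = 0 := by
  set S := ∑ i, ∑ j ∈ univ.filter (adj i), g i j
  have hS : S = -S :=
    calc S = ∑ i, ∑ j, if adj i j then g i j else 0 := by simp only [S, sum_filter]
      _ = ∑ j, ∑ i, if adj i j then g i j else 0 := sum_comm
      _ = ∑ j, ∑ i, -(if adj j i then g j i else 0) := by
        refine sum_congr rfl fun j _ => sum_congr rfl fun i _ => ?_
        by_cases h : adj i j
        · simp only [h, hsym i j h, if_true, hg i j h]
        · simp only [h, mt (hsym j i) h, if_false, neg_zero]
      _ = -S := by simp only [S, sum_neg_distrib, sum_filter]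
  refine (nsmul_eq_zero_iff_right two_ne_zero).1 ?_
  rw [two_nsmul]
  nth_rewrite 2 [hS]
  exact add_neg_cancel S

open Finset in
theorem freq_measurement_equilibrium_zero_general {I : Type*} [Fintype I] [Nonempty I]
    (adj : I → I → Prop) [DecidableRel adj]
    (hsym : ∀ i j, adj i j ↔ adj j i)
    (f : I → ℝ → ℝ)
    (z : I → I → ℝ) (hz : ∀ i j, adj i j → z i j = - z j i)
    (D τ : I → ℝ) (hDτ : ∀ i, 0 < D i + τ i)
    (P μ γm γp : I → ℝ) (ω₀ : ℝ)
    (h1 : ∀ i, ω₀ + deriv (f i) (P i) + μ i - γm i + γp i = 0)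
    (h2 : ∀ i, -(∑ j ∈ univ.filter (fun j => adj i j), (μ i - μ j))
          - (∑ j ∈ univ.filter (fun j => adj i j), z i j)
          + D i * ω₀
          + τ i * (-(μ i) - deriv (f i) (P i) + γm i - γp i) = 0) :
    ω₀ = 0 := by
  have hadj : ∀ i j, adj i j → adj j i := fun i j => (hsym i j).1
  have hnode : ∀ i, (D i + τ i) * ω₀ =
      (∑ j ∈ univ.filter (adj i), (μ i - μ j)) + ∑ j ∈ univ.filter (adj i), z i j :=
    fun i => by linear_combination h2 i + τ i * h1 i
  have hlaplacian : ∑ i, ∑ j ∈ univ.filter (adj i), (μ i - μ j) = 0 :=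
    sum_sum_filter_eq_zero_of_antisymm adj hadj _ fun i j _ => (neg_sub (μ j) (μ i)).symm
  have htotal : (∑ i, (D i + τ i)) * ω₀ = 0 := by
    rw [sum_mul, sum_congr rfl fun i _ => hnode i, sum_add_distrib, hlaplacian,
      sum_sum_filter_eq_zero_of_antisymm adj hadj z hz, add_zero]
  have hpos : 0 < ∑ i, (D i + τ i) := sum_pos (fun i _ => hDτ i) univ_nonempty
  exact (mul_eq_zero.1 htotal).resolve_left hpos.ne'

open Finset in
/-- **Core of Lemma 2.** At any equilibrium of the frequency-measurement-based
estimator together with the generator control law, the common frequency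
deviation `ω₀` is zero. -/
theorem freq_measurement_equilibrium_zero {I : Type*} [Fintype I] [Nonempty I]
    (adj : I → I → Prop) [DecidableRel adj]
    (hsym : ∀ i j, adj i j ↔ adj j i) (hirr : ∀ i, ¬ adj i i)
    (f : I → ℝ → ℝ) (hdiff : ∀ i, Differentiable ℝ (f i))
    (z : I → I → ℝ) (hz : ∀ i j, adj i j → z i j = - z j i)
    (D τ : I → ℝ) (hDτ : ∀ i, 0 < D i + τ i)
    (P μ γm γp : I → ℝ) (ω₀ : ℝ)
    (h1 : ∀ i, ω₀ + deriv (f i) (P i) + μ i - γm i + γp i = 0)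
    (h2 : ∀ i, -(∑ j ∈ univ.filter (fun j => adj i j), (μ i - μ j))
          - (∑ j ∈ univ.filter (fun j => adj i j), z i j)
          + D i * ω₀
          + τ i * (-(μ i) - deriv (f i) (P i) + γm i - γp i) = 0) :
    ω₀ = 0 :=
  freq_measurement_equilibrium_zero_general adj hsym f z hz D τ hDτ P μ γm γp ω₀ h1 h2
end

section
/- Let L : ℝⁿ × ℝᵐ → ℝ be differentiable, such that x₁ ↦ L(x₁, x₂) is convex for every fixed x₂ and x₂ ↦ L(x₁, x₂) is concave for every fixed x₁, and let (x₁*, x₂*) be a saddle point of L, i.e. L(x₁*, x₂) ≤ L(x₁*, x₂*) ≤ L(x₁, x₂*) for all x₁ ∈ ℝⁿ, x₂ ∈ ℝᵐ. Then for every (x₁, x₂) ∈ ℝⁿ × ℝᵐ, −(x₁ − x₁*)·∇_{x₁}L(x₁, x₂) + (x₂ − x₂*)·∇_{x₂}L(x₁, x₂) ≤ 0. -/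
/-!
Convexity of `L(·, x₂)` gives `⟪∇₁L, x₁* - x₁⟫ ≤ L(x₁*, x₂) - L(x₁, x₂)` and concavity of
`L(x₁, ·)` gives `L(x₁, x₂*) - L(x₁, x₂) ≤ ⟪∇₂L, x₂* - x₂⟫`. Subtracting, the dissipation term is
at most `L(x₁*, x₂) - L(x₁, x₂*)`, and the saddle inequalities bound this by
`L(x₁*, x₂*) - L(x₁*, x₂*) = 0`.
-/

section FirstOrderCondition

variable {E : Type*} [NormedAddCommGroup E] [NormedSpace ℝ E] {f : E → ℝ} {s : Set E} {x y : E}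

theorem ConvexOn.apply_sub_le_of_hasFDerivAt {f' : E →L[ℝ] ℝ} (hf : ConvexOn ℝ s f)
    (hx : x ∈ s) (hy : y ∈ s) (hf' : HasFDerivAt f f' x) : f' (y - x) ≤ f y - f x := by
  have hline : HasDerivAt (f ∘ AffineMap.lineMap (k := ℝ) x y) (f' (y - x)) 0 := by
    rw [← AffineMap.lineMap_apply_zero x y (k := ℝ)] at hf'
    exact hf'.comp_hasDerivAt 0 AffineMap.hasDerivAt_lineMap
  have hslope := (hf.comp_affineMap (AffineMap.lineMap x y)).le_slope_of_hasDerivAt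
    (by simpa using hx) (by simpa using hy) zero_lt_one hline
  simpa [slope_def_field] using hslope

end FirstOrderCondition

section Gradient

variable {F : Type*} [NormedAddCommGroup F] [InnerProductSpace ℝ F] [CompleteSpace F]
  {f : F → ℝ} {s : Set F} {x y g : F}

theorem ConvexOn.inner_sub_le_of_hasGradientAt (hf : ConvexOn ℝ s f) (hx : x ∈ s) (hy : y ∈ s)
    (hg : HasGradientAt f g x) : inner ℝ g (y - x) ≤ f y - f x := by
  simpa using hf.apply_sub_le_of_hasFDerivAt hx hy (hasGradientAt_iff_hasFDerivAt.mp hg)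

theorem ConcaveOn.le_inner_sub_of_hasGradientAt (hf : ConcaveOn ℝ s f) (hx : x ∈ s) (hy : y ∈ s)
    (hg : HasGradientAt f g x) : f y - f x ≤ inner ℝ g (y - x) := by
  have hneg : HasGradientAt (-f) (-g) x := by
    rw [hasGradientAt_iff_hasFDerivAt, map_neg]
    exact (hasGradientAt_iff_hasFDerivAt.mp hg).neg
  have hle := hf.neg.inner_sub_le_of_hasGradientAt hx hy hneg
  simp only [inner_neg_left, Pi.neg_apply] at hle
  linarith

end Gradient

/-- For a differentiable convex–concave function `L` with saddle point
`(x₁s, x₂s)`, the primal–dual dissipation inequality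
`-(x₁ - x₁s)·∇_{x₁}L(x₁,x₂) + (x₂ - x₂s)·∇_{x₂}L(x₁,x₂) ≤ 0` holds everywhere. -/
theorem saddle_point_dissipation {n m : ℕ}
    (L : EuclideanSpace ℝ (Fin n) → EuclideanSpace ℝ (Fin m) → ℝ)
    (hdiff : Differentiable ℝ
      (fun q : EuclideanSpace ℝ (Fin n) × EuclideanSpace ℝ (Fin m) => L q.1 q.2))
    (hconv : ∀ x₂, ConvexOn ℝ Set.univ (fun x₁ => L x₁ x₂))
    (hconc : ∀ x₁, ConcaveOn ℝ Set.univ (fun x₂ => L x₁ x₂))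
    (x₁s : EuclideanSpace ℝ (Fin n)) (x₂s : EuclideanSpace ℝ (Fin m))
    (hsaddle : ∀ x₁ x₂, L x₁s x₂ ≤ L x₁s x₂s ∧ L x₁s x₂s ≤ L x₁ x₂s) :
    ∀ (x₁ : EuclideanSpace ℝ (Fin n)) (x₂ : EuclideanSpace ℝ (Fin m)),
      -(inner ℝ (x₁ - x₁s) (gradient (fun y => L y x₂) x₁) : ℝ)
        + (inner ℝ (x₂ - x₂s) (gradient (fun y => L x₁ y) x₂) : ℝ) ≤ 0 := by
  intro x₁ x₂
  have hd₁ : DifferentiableAt ℝ (fun y => L y x₂) x₁ :=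
    (hdiff (x₁, x₂)).comp (f := fun y => (y, x₂)) x₁
      (differentiableAt_id.prodMk (differentiableAt_const x₂))
  have hd₂ : DifferentiableAt ℝ (fun y => L x₁ y) x₂ :=
    (hdiff (x₁, x₂)).comp (f := fun y => (x₁, y)) x₂
      ((differentiableAt_const x₁).prodMk differentiableAt_id)
  have h₁ := (hconv x₂).inner_sub_le_of_hasGradientAt (Set.mem_univ _) (Set.mem_univ x₁s)
    hd₁.hasGradientAt
  have h₂ := (hconc x₁).le_inner_sub_of_hasGradientAt (Set.mem_univ _)
    (Set.mem_univ x₂s) hd₂.hasGradientAt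
  rw [← neg_sub x₁s x₁, ← neg_sub x₂s x₂, inner_neg_left, inner_neg_left,
    real_inner_comm _ (x₁s - x₁), real_inner_comm _ (x₂s - x₂)]
  linarith [hsaddle x₁ x₂]
end

section
/- (The excitation controller satisfies condition C2.) Let k_E > 0, let E_q : ℝ → ℝ be a function and E_q*, E_f* real constants, and let E_f : ℝ → ℝ be differentiable with E_f'(t) = −(E_f(t) − E_f*) − k_E (E_q(t) − E_q*) for all t. Then the storage function S(t) = (1/(2 k_E))(E_f(t) − E_f*)² satisfies, for all t, S'(t) = (−E_q(t) − (−E_q*))·(E_f(t) − E_f*) − (1/k_E)(E_f(t) − E_f*)²; in particular S'(t) ≤ (−E_q(t) − (−E_q*))·(E_f(t) − E_f*) − φ(t) with positive definite dissipation φ(t) = (1/k_E)(E_f(t) − E_f*)², so the excitation dynamics are strictly incrementally output passive with input −E_q and output E_f. -/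
theorem HasDerivAt.inv_two_mul_mul_sub_sq {f : ℝ → ℝ} {f' t : ℝ} (k a : ℝ)
    (hf : HasDerivAt f f' t) :
    HasDerivAt (fun s => 1 / (2 * k) * (f s - a) ^ 2) ((f t - a) * f' / k) t :=
  (((hf.sub_const a).pow 2).const_mul _).congr_deriv (by ring)

/-- **The excitation controller satisfies condition C2.**
Under the excitation controller `E_f' = -(E_f - E_f*) - k_E (E_q - E_q*)`,
the storage function `S(t) = (1/(2 k_E)) (E_f t - E_fs)²` satisfies
`S'(t) = (-(E_q t) - (-E_qs)) * (E_f t - E_fs) - (1/k_E) (E_f t - E_fs)²`,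
hence strict incremental output passivity with input `-E_q` and output `E_f`. -/
theorem excitation_control_C2 (kE : ℝ) (hk : 0 < kE) (Eq : ℝ → ℝ) (Eqs Efs : ℝ)
    (Ef : ℝ → ℝ) (hEf : Differentiable ℝ Ef)
    (hdyn : ∀ t, deriv Ef t = -(Ef t - Efs) - kE * (Eq t - Eqs)) :
    ∀ t, deriv (fun s => (1/(2*kE)) * (Ef s - Efs)^2) t
        = (-(Eq t) - (-Eqs)) * (Ef t - Efs) - (1/kE) * (Ef t - Efs)^2 ∧
      deriv (fun s => (1/(2*kE)) * (Ef s - Efs)^2) t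
        ≤ (-(Eq t) - (-Eqs)) * (Ef t - Efs) - (1/kE) * (Ef t - Efs)^2 := by
  intro t
  have hS : deriv (fun s => (1/(2*kE)) * (Ef s - Efs)^2) t
      = (-(Eq t) - (-Eqs)) * (Ef t - Efs) - (1/kE) * (Ef t - Efs)^2 := by
    rw [((hEf t).hasDerivAt.inv_two_mul_mul_sub_sq kE Efs).deriv, hdyn t]
    field_simp
    ring
  exact ⟨hS, hS.le⟩
end

section
/- Let D > 0, c > 0, τ > 0 and β be real numbers, and let M be the symmetric 3×3 real matrix M = [[−D, 0, −β/2], [0, −c, −τc/2], [−β/2, −τc/2, −τ]]. Then M is negative definite (i.e. xᵀMx < 0 for every nonzero x ∈ ℝ³) if and only if β² < τ·D·(4 − τ·c). -/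
/-!
Completing the square in the first two coordinates gives
`a b · xᵀMx = -(b (a x₀ - p x₂)² + a (b x₁ - q x₂)² + s x₂²)` with `s = a b r - b p² - a q²`,
which is `a b` times the Schur complement of the block `diag(-a, -b)`, up to sign. So the form is
negative definite iff `s > 0`; necessity comes from the vector `(b p, a q, a b)`, which kills
both squares.
-/

open Matrix

namespace ArrowheadMatrix

variable (a b p q r : ℝ)

theorem dotProduct_mulVec_self (x : Fin 3 → ℝ) :
    x ⬝ᵥ ((!![-a, 0, p; 0, -b, q; p, q, -r] : Matrix (Fin 3) (Fin 3) ℝ) *ᵥ x) =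
      -a * x 0 ^ 2 - b * x 1 ^ 2 - r * x 2 ^ 2 + 2 * p * x 0 * x 2 + 2 * q * x 1 * x 2 := by
  simp only [dotProduct, mulVec, Fin.sum_univ_three, cons_val', cons_val_zero, cons_val_one,
    cons_val_two, empty_val', cons_val_fin_one, head_cons, tail_cons, head_fin_const, of_apply]
  ring

theorem mul_dotProduct_mulVec_self (x : Fin 3 → ℝ) :
    a * b * (x ⬝ᵥ ((!![-a, 0, p; 0, -b, q; p, q, -r] : Matrix (Fin 3) (Fin 3) ℝ) *ᵥ x)) =
      -(b * (a * x 0 - p * x 2) ^ 2 + a * (b * x 1 - q * x 2) ^ 2 +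
        (a * b * r - b * p ^ 2 - a * q ^ 2) * x 2 ^ 2) := by
  rw [dotProduct_mulVec_self]
  ring

variable {a b}

theorem negDef_iff (ha : 0 < a) (hb : 0 < b) :
    (∀ x : Fin 3 → ℝ, x ≠ 0 →
        x ⬝ᵥ ((!![-a, 0, p; 0, -b, q; p, q, -r] : Matrix (Fin 3) (Fin 3) ℝ) *ᵥ x) < 0) ↔
      b * p ^ 2 + a * q ^ 2 < a * b * r := by
  have hab : 0 < a * b := mul_pos ha hb
  constructor
  · intro h
    have hx : (![b * p, a * q, a * b] : Fin 3 → ℝ) ≠ 0 :=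
      fun h0 => hab.ne' (by simpa using congrFun h0 2)
    have hneg := mul_neg_of_pos_of_neg hab (h _ hx)
    rw [mul_dotProduct_mulVec_self] at hneg
    simp only [cons_val_zero, cons_val_one, cons_val_two, head_cons, tail_cons] at hneg
    nlinarith [mul_pos hab hab]
  · intro hs x hx
    refine neg_of_mul_neg_right ?_ hab.le
    rw [mul_dotProduct_mulVec_self, neg_neg_iff_pos]
    by_contra! hle
    have h₂ : x 2 = 0 := by
      by_contra h₂
      nlinarith [mul_nonneg hb.le (sq_nonneg (a * x 0 - p * x 2)),
        mul_nonneg ha.le (sq_nonneg (b * x 1 - q * x 2)),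
        mul_pos (sub_pos.mpr hs) (sq_pos_of_ne_zero h₂)]
    simp only [h₂, mul_zero, sub_zero, ne_eq, OfNat.ofNat_ne_zero, not_false_eq_true, zero_pow,
      add_zero] at hle
    have h₀ : x 0 = 0 := by
      by_contra h
      linarith [mul_pos hb (sq_pos_of_ne_zero (mul_ne_zero ha.ne' h)),
        mul_nonneg ha.le (sq_nonneg (b * x 1))]
    have h₁ : x 1 = 0 := by
      by_contra h
      linarith [mul_pos ha (sq_pos_of_ne_zero (mul_ne_zero hb.ne' h)),
        mul_nonneg hb.le (sq_nonneg (a * x 0))]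
    exact hx (funext fun i => by fin_cases i <;> assumption)

end ArrowheadMatrix

open Matrix in
theorem schur_negative_definite_iff_general (D c τ β : ℝ)
    (hD : 0 < D) (hc : 0 < c) :
    (∀ x : Fin 3 → ℝ, x ≠ 0 →
        x ⬝ᵥ ((!![-D, 0, -β/2; 0, -c, -τ*c/2; -β/2, -τ*c/2, -τ] :
          Matrix (Fin 3) (Fin 3) ℝ) *ᵥ x) < 0) ↔
      β^2 < τ * D * (4 - τ * c) := by
  have hschur : D * c * τ - (c * (-β / 2) ^ 2 + D * (-τ * c / 2) ^ 2) =
      c / 4 * (τ * D * (4 - τ * c) - β ^ 2) := by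
    ring
  rw [ArrowheadMatrix.negDef_iff _ _ _ hD hc, ← sub_pos, hschur, ← sub_pos (b := β ^ 2),
    mul_pos_iff_of_pos_left (by positivity)]

open Matrix in
/-- The Schur-complement computation in the stability proof of the
frequency-measurement-based controller: the symmetric matrix
`M = [[-D, 0, -β/2], [0, -c, -τc/2], [-β/2, -τc/2, -τ]]` is negative definite
iff `β² < τ·D·(4 - τ·c)`. -/
theorem schur_negative_definite_iff (D c τ β : ℝ)
    (hD : 0 < D) (hc : 0 < c) (hτ : 0 < τ) :
    (∀ x : Fin 3 → ℝ, x ≠ 0 →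
        x ⬝ᵥ ((!![-D, 0, -β/2; 0, -c, -τ*c/2; -β/2, -τ*c/2, -τ] :
          Matrix (Fin 3) (Fin 3) ℝ) *ᵥ x) < 0) ↔
      β^2 < τ * D * (4 - τ * c) :=
  schur_negative_definite_iff_general D c τ β hD hc
end
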